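/- arXiv:1110.4900 — 3 statements merged into one kernel-verified Lean document; each statement's English description precedes it below -/
import Mathlib

section
/- Let G be a finite simple graph, let L be a list-assignment for G with |L(v)| = 3 for every vertex v, and let v_1, …, v_k be distinct vertices of G. For i = 0, …, k let G_i denote the induced subgraph G − {v_{i+1}, …, v_k} (so G_k = G and G_0 = G − {v_1, …, v_k}). If for every i = 1, …, k the degree of v_i in G_i is at most 5, then every arboreal L-coloring of G_0 can be extended to an arboreal L-coloring of G. -/
/-!
Colour `v_1, …, v_k` greedily in this order. When `v_i` is reached, at most five of its
neighbours are already coloured, so by pigeonhole one of its three colours appears on at most one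
of them. Giving `v_i` that colour closes no monochromatic cycle, because a cycle through `v_i`
meets two distinct neighbours of `v_i`.
-/

/-- `ArbColOn G s f` : the coloring `f` is arboreal on the vertex set `s`,
i.e. for every color `c`, the subgraph of `G` induced on the vertices of `s`
colored `c` is acyclic (a forest). -/
def ArbColOn {V : Type*} {α : Type*} (G : SimpleGraph V) (s : Set V) (f : V → α) : Prop :=
  ∀ c : α, (G.induce {v | v ∈ s ∧ f v = c}).IsAcyclic

namespace SimpleGraph

variable {V : Type*} {G : SimpleGraph V} {s t : Set V}

lemma isAcyclic_induce_iff :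
    (G.induce s).IsAcyclic ↔
      ∀ ⦃u : V⦄ (c : G.Walk u u), c.IsCycle → ∃ x ∈ c.support, x ∉ s := by
  refine ⟨fun hs u c hc => ?_, fun h u c hc => ?_⟩
  · by_contra! hcs
    refine hs (c.induce s hcs) ?_
    rw [← Walk.isCycle_map_iff_of_injective (f := (Embedding.induce s).toHom)
      Subtype.val_injective, Walk.map_induce]
    exact hc
  · obtain ⟨x, hx, hxs⟩ := h _ (hc.map (f := (Embedding.induce s).toHom) Subtype.val_injective)
    rw [Walk.support_map, List.mem_map] at hx
    obtain ⟨y, -, rfl⟩ := hx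
    exact hxs y.2

lemma IsAcyclic.induce_of_subset (hs : (G.induce s).IsAcyclic) (hts : t ⊆ s) :
    (G.induce t).IsAcyclic :=
  hs.embedding (G.induceHomOfLE hts)

lemma IsAcyclic.induce_insert {w : V} (hs : (G.induce s).IsAcyclic)
    (hw : (G.neighborSet w ∩ s).Subsingleton) : (G.induce (insert w s)).IsAcyclic := by
  rw [isAcyclic_induce_iff] at hs ⊢
  intro u c hc
  by_contra! hcs
  by_cases hwc : w ∈ c.support
  · have hsub : c.toSubgraph.neighborSet w ⊆ G.neighborSet w ∩ s := fun x hx => by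
      have hadj : G.Adj w x := c.toSubgraph.adj_sub hx
      have hxc : x ∈ c.support := by
        simpa using c.toSubgraph.edge_vert hx.symm
      exact ⟨hadj, (hcs x hxc).resolve_left hadj.ne'⟩
    have := Walk.IsCycle.ncard_neighborSet_toSubgraph_eq_two hc hwc
    have hc1 := hw.anti hsub
    have := (Set.ncard_le_one hc1.finite).2 fun a ha b hb => hc1 ha hb
    omega
  · obtain ⟨x, hx, hxs⟩ := hs c hc
    exact hxs ((hcs x hx).resolve_left (fun h => hwc (h ▸ hx)))

end SimpleGraph

lemma Set.exists_mem_subsingleton_fiber {β α : Type*} {N : Set β} (hN : N.Finite)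
    {L : Finset α} (hNL : N.ncard < L.card * 2) (f : β → α) :
    ∃ c ∈ L, {x ∈ N | f x = c}.Subsingleton := by
  classical
  rw [Set.ncard_eq_toFinset_card N hN] at hNL
  obtain ⟨c, hc, hfib⟩ := Finset.exists_card_fiber_lt_of_card_lt_mul (f := f) hNL
  refine ⟨c, hc, fun x hx y hy => Finset.card_le_one.1 (Nat.lt_succ_iff.1 hfib) x ?_ y ?_⟩
  · simpa using hx
  · simpa using hy

open SimpleGraph

section ArbColOn

variable {V α : Type*} {G : SimpleGraph V} {s t : Set V} {f : V → α}

lemma ArbColOn.mono (hf : ArbColOn G s f) (hts : t ⊆ s) : ArbColOn G t f := fun c =>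
  (hf c).induce_of_subset fun _ hx => ⟨hts hx.1, hx.2⟩

lemma ArbColOn.update_insert [DecidableEq V] {w : V} {c : α} (hf : ArbColOn G s f)
    (hc : {x ∈ G.neighborSet w ∩ s | f x = c}.Subsingleton) :
    ArbColOn G (insert w s) (Function.update f w c) := by
  intro d
  by_cases hdc : d = c
  · subst hdc
    refine ((hf d).induce_insert (w := w) fun x hx y hy => hc ⟨⟨hx.1, hx.2.1⟩, hx.2.2⟩
      ⟨⟨hy.1, hy.2.1⟩, hy.2.2⟩).induce_of_subset ?_
    rintro x ⟨rfl | hxs, hx⟩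
    · exact Set.mem_insert _ _
    · by_cases hxw : x = w
      · exact hxw ▸ Set.mem_insert _ _
      · exact Set.mem_insert_of_mem _ ⟨hxs, by rwa [Function.update_of_ne hxw] at hx⟩
  · refine (hf d).induce_of_subset ?_
    rintro x ⟨hxs, hx⟩
    have hxw : x ≠ w := by
      rintro rfl
      exact hdc (by rw [← hx, Function.update_self])
    rw [Function.update_of_ne hxw] at hx
    exact ⟨hxs.resolve_left hxw, hx⟩

lemma ArbColOn.exists_update_insert [DecidableEq V] {w : V} (hf : ArbColOn G s f)
    (hfin : (G.neighborSet w ∩ s).Finite) {L : Finset α}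
    (hdeg : (G.neighborSet w ∩ s).ncard < L.card * 2) :
    ∃ c ∈ L, ArbColOn G (insert w s) (Function.update f w c) := by
  obtain ⟨c, hcL, hc⟩ := Set.exists_mem_subsingleton_fiber hfin hdeg f
  exact ⟨c, hcL, hf.update_insert hc⟩

end ArbColOn

section StageVerts

variable {V : Type*} {k : ℕ} (v : Fin k → V)

/-- The vertex set of `G_i = G - {v_i, …, v_{k-1}}` (indices from `0`). -/
def stageVerts (i : ℕ) : Set V := {x | ∀ j : Fin k, i ≤ j → x ≠ v j}

lemma stageVerts_zero : stageVerts v 0 = {x | ∀ j : Fin k, x ≠ v j} := by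
  simp [stageVerts]

lemma stageVerts_of_le {i : ℕ} (hki : k ≤ i) : stageVerts v i = Set.univ :=
  Set.eq_univ_of_forall fun _ j hj => absurd (hki.trans hj) (not_le.2 j.isLt)

lemma stageVerts_succ_subset (j : Fin k) :
    stageVerts v (j + 1) ⊆ insert (v j) (stageVerts v j) := by
  intro x hx
  by_cases hxj : x = v j
  · exact Or.inl hxj
  · refine Or.inr fun j' hj' => ?_
    rcases hj'.eq_or_lt with h | h
    · rwa [← Fin.ext h]
    · exact hx j' h

end StageVerts

lemma exists_arbColOn_stageVerts {V α : Type*} [Finite V] [DecidableEq V] {G : SimpleGraph V}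
    {L : V → Finset α} {k : ℕ} {v : Fin k → V}
    (hdeg : ∀ j : Fin k, (G.neighborSet (v j) ∩ stageVerts v j).ncard < (L (v j)).card * 2)
    {f : V → α} (hfL : ∀ x ∈ stageVerts v 0, f x ∈ L x)
    (hf : ArbColOn G (stageVerts v 0) f) :
    ∀ i ≤ k, ∃ g : V → α, (∀ x ∈ stageVerts v i, g x ∈ L x) ∧
      ArbColOn G (stageVerts v i) g ∧ Set.EqOn g f (stageVerts v 0) := by
  intro i hik
  induction i with
  | zero => exact ⟨f, hfL, hf, Set.eqOn_refl f _⟩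
  | succ i ih =>
    obtain ⟨g, hgL, hg, hgf⟩ := ih (by omega)
    set j : Fin k := ⟨i, by omega⟩
    obtain ⟨c, hcL, hgc⟩ := hg.exists_update_insert (Set.toFinite _) (hdeg j)
    refine ⟨Function.update g (v j) c, fun x hx => ?_, hgc.mono (stageVerts_succ_subset v j),
      fun x hx => ?_⟩
    · rcases stageVerts_succ_subset v j hx with rfl | hx
      · rwa [Function.update_self]
      · by_cases hxj : x = v j
        · rwa [hxj, Function.update_self]
        · rw [Function.update_of_ne hxj]
          exact hgL x hx
    · rw [Function.update_of_ne (hx j (Nat.zero_le _))]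
      exact hgf hx

theorem stmt_0_general {V α : Type*} [Fintype V] (G : SimpleGraph V)
    (L : V → Finset α) (hL : ∀ x, (L x).card = 3)
    (k : ℕ) (v : Fin k → V)
    -- for every i, the degree of `v i` in `G_i = G − {v j : j > i}` is at most 5
    (hdeg : ∀ i : Fin k,
      {u | (∀ j : Fin k, (i : ℕ) < (j : ℕ) → u ≠ v j) ∧ G.Adj (v i) u}.ncard ≤ 5)
    (f : V → α)
    -- `f` is an arboreal L-coloring of `G_0 = G − {v 1, …, v k}`
    (hfL : ∀ x, (∀ j : Fin k, x ≠ v j) → f x ∈ L x)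
    (hf : ArbColOn G {x | ∀ j : Fin k, x ≠ v j} f) :
    -- it extends to an arboreal L-coloring of `G`
    ∃ g : V → α, (∀ x, g x ∈ L x) ∧ ArbColOn G Set.univ g ∧
      ∀ x, (∀ j : Fin k, x ≠ v j) → g x = f x := by
  classical
  have hdeg' (i : Fin k) : (G.neighborSet (v i) ∩ stageVerts v i).ncard < (L (v i)).card * 2 :=
    calc (G.neighborSet (v i) ∩ stageVerts v i).ncard
        ≤ {u | (∀ j : Fin k, (i : ℕ) < (j : ℕ) → u ≠ v j) ∧ G.Adj (v i) u}.ncard :=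
          Set.ncard_le_ncard (fun u hu => ⟨fun j hj => hu.2 j hj.le, hu.1⟩) (Set.toFinite _)
      _ < (L (v i)).card * 2 := by rw [hL]; linarith [hdeg i]
  rw [← stageVerts_zero] at hf
  obtain ⟨g, hgL, hg, hgf⟩ := exists_arbColOn_stageVerts hdeg'
    (fun x hx => hfL x (by rwa [stageVerts_zero] at hx)) hf k le_rfl
  rw [stageVerts_of_le v le_rfl] at hgL hg
  exact ⟨g, fun x => hgL x trivial, hg, fun x hx => hgf (by rwa [stageVerts_zero])⟩

theorem stmt_0 {V α : Type*} [Fintype V] (G : SimpleGraph V)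
    (L : V → Finset α) (hL : ∀ x, (L x).card = 3)
    (k : ℕ) (v : Fin k → V) (hv : Function.Injective v)
    -- for every i, the degree of `v i` in `G_i = G − {v j : j > i}` is at most 5
    (hdeg : ∀ i : Fin k,
      {u | (∀ j : Fin k, (i : ℕ) < (j : ℕ) → u ≠ v j) ∧ G.Adj (v i) u}.ncard ≤ 5)
    (f : V → α)
    -- `f` is an arboreal L-coloring of `G_0 = G − {v 1, …, v k}`
    (hfL : ∀ x, (∀ j : Fin k, x ≠ v j) → f x ∈ L x)
    (hf : ArbColOn G {x | ∀ j : Fin k, x ≠ v j} f) :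
    -- it extends to an arboreal L-coloring of `G`
    ∃ g : V → α, (∀ x, g x ∈ L x) ∧ ArbColOn G Set.univ g ∧
      ∀ x, (∀ j : Fin k, x ≠ v j) → g x = f x :=
  stmt_0_general G L hL k v hdeg f hfL hf
end

section
/- Let G be a finite simple graph, let L be a list-assignment for G with |L(v)| = 3 for every vertex v, and let u be a vertex of degree 4 that is adjacent to a vertex w of degree at most 5. Then every arboreal L-coloring of G − {u, w} can be extended to an arboreal L-coloring of G in at least two distinct ways. -/
open SimpleGraph Function

section

variable {V α : Type*} {G : SimpleGraph V}

theorem SimpleGraph.isAcyclic_induce_iff_s5 {s : Set V} :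
    (G.induce s).IsAcyclic ↔ ∀ ⦃v : V⦄ (p : G.Walk v v), p.IsCycle → ∃ x ∈ p.support, x ∉ s := by
  refine ⟨fun h v p hp => ?_, fun h v p hp => ?_⟩
  · by_contra! hs
    refine h (p.induce s hs) ?_
    rw [← Walk.map_induce p hs] at hp
    exact (Walk.isCycle_map_iff_of_injective (Embedding.induce (G := G) s).injective).1 hp
  · obtain ⟨x, hx, hxs⟩ :=
      h _ (hp.map (f := (Embedding.induce s).toHom) (Embedding.induce (G := G) s).injective)
    rw [Walk.support_map, List.mem_map] at hx
    obtain ⟨y, -, rfl⟩ := hx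
    exact hxs y.2

theorem ArbColOn.congr {s : Set V} {f g : V → α} (hf : ArbColOn G s f) (h : Set.EqOn f g s) :
    ArbColOn G s g := by
  intro c
  rw [show {v | v ∈ s ∧ g v = c} = {v | v ∈ s ∧ f v = c} from
    Set.ext fun x => and_congr_right fun hx => by rw [h hx]]
  exact hf c

/-- A monochromatic cycle through `v` would give `v` two distinct neighbours of its own colour,
namely `snd` and `penultimate` of the cycle rotated to start at `v`. -/
theorem arbColOn_insert {s : Set V} {f : V → α} {v : V} (hf : ArbColOn G s f)
    (hv : (G.neighborSet v ∩ s ∩ f ⁻¹' {f v}).Subsingleton) : ArbColOn G (insert v s) f := by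
  classical
  intro c
  rw [isAcyclic_induce_iff_s5]
  intro x p hp
  by_contra! hsupp
  obtain ⟨y, hy, hys⟩ := isAcyclic_induce_iff_s5.1 (hf c) p hp
  obtain ⟨hyv, hyc⟩ := hsupp y hy
  replace hyv : y = v := hyv.resolve_right fun hy' => hys ⟨hy', hyc⟩
  subst y
  have hq := hp.rotate hy
  set q := p.rotate v hy
  have hmem : ∀ z ∈ q.support, G.Adj v z → z ∈ G.neighborSet v ∩ s ∩ f ⁻¹' {f v} := by
    intro z hz hvz
    obtain ⟨hz' | hzs, hzc⟩ := hsupp z ((Walk.mem_support_rotate_iff p v hy).1 hz)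
    · exact absurd hz' hvz.ne'
    · exact ⟨⟨hvz, hzs⟩, hzc.trans hyc.symm⟩
  exact hq.snd_ne_penultimate <| hv
    (hmem _ (q.getVert_mem_support 1) (Walk.adj_snd hq.not_nil))
    (hmem _ (q.getVert_mem_support _) (Walk.adj_penultimate hq.not_nil).symm)

theorem arbColOn_update_insert [DecidableEq V] {s : Set V} {f : V → α} {v : V} {c : α}
    (hf : ArbColOn G s f) (hvs : v ∉ s) (hc : (G.neighborSet v ∩ s ∩ f ⁻¹' {c}).Subsingleton) :
    ArbColOn G (insert v s) (update f v c) := by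
  refine arbColOn_insert
    (hf.congr fun x hx => (update_of_ne (ne_of_mem_of_not_mem hx hvs) c f).symm) ?_
  rw [update_self]
  refine hc.anti fun x ⟨⟨hvx, hxs⟩, hxc⟩ => ⟨⟨hvx, hxs⟩, ?_⟩
  rwa [Set.mem_preimage, update_of_ne (ne_of_mem_of_not_mem hxs hvs)] at hxc

noncomputable def heavyColors (Lv : Finset α) (g : V → α) (N : Set V) : Finset α :=
  Lv.filter fun c => 1 < (N ∩ g ⁻¹' {c}).ncard

section Counting

variable {N : Set V} (Lv : Finset α) (g : V → α)

theorem sum_ncard_inter_preimage_le (hN : N.Finite) :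
    ∑ c ∈ Lv, (N ∩ g ⁻¹' {c}).ncard ≤ N.ncard := by
  have := Classical.decEq α
  lift N to Finset V using hN
  have hfib : ∀ c, ((N : Set V) ∩ g ⁻¹' {c}).ncard = (N.filter fun x => g x = c).card :=
    fun c => by rw [← Set.ncard_coe_finset, Finset.coe_filter]; rfl
  simp only [hfib]
  rw [Finset.sum_card_fiberwise_eq_card_filter, Set.ncard_coe_finset]
  exact Finset.card_filter_le _ _

theorem two_mul_card_heavyColors_le (hN : N.Finite) :
    2 * (heavyColors Lv g N).card ≤ N.ncard := by
  calc 2 * (heavyColors Lv g N).card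
      = ∑ c ∈ Lv, if 1 < (N ∩ g ⁻¹' {c}).ncard then 2 else 0 := by
        rw [heavyColors, Finset.card_filter, Finset.mul_sum]
        exact Finset.sum_congr rfl fun c _ => by split_ifs <;> rfl
    _ ≤ ∑ c ∈ Lv, (N ∩ g ⁻¹' {c}).ncard :=
        Finset.sum_le_sum fun c _ => by split_ifs <;> omega
    _ ≤ N.ncard := sum_ncard_inter_preimage_le Lv g hN

theorem card_add_card_heavyColors_le (hN : N.Finite)
    (hcov : ∀ c ∈ Lv, (N ∩ g ⁻¹' {c}).Nonempty) :
    Lv.card + (heavyColors Lv g N).card ≤ N.ncard := by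
  calc Lv.card + (heavyColors Lv g N).card
      = ∑ c ∈ Lv, (1 + if 1 < (N ∩ g ⁻¹' {c}).ncard then 1 else 0) := by
        rw [heavyColors, Finset.card_filter, Finset.sum_add_distrib, Finset.card_eq_sum_ones]
    _ ≤ ∑ c ∈ Lv, (N ∩ g ⁻¹' {c}).ncard := Finset.sum_le_sum fun c hc => by
        have := (Set.ncard_pos (hN.subset Set.inter_subset_left)).2 (hcov c hc)
        split_ifs <;> omega
    _ ≤ N.ncard := sum_ncard_inter_preimage_le Lv g hN

theorem subsingleton_of_notMem_heavyColors (hN : N.Finite) {c : α} (hc : c ∈ Lv)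
    (hch : c ∉ heavyColors Lv g N) : (N ∩ g ⁻¹' {c}).Subsingleton := by
  have : Finite ↑(N ∩ g ⁻¹' {c}) := hN.subset Set.inter_subset_left
  rw [← Set.ncard_le_one_iff_subsingleton, ← not_lt]
  exact fun h => hch (Finset.mem_filter.2 ⟨hc, h⟩)

theorem exists_subsingleton_of_card_heavyColors_lt (hN : N.Finite)
    (h : (heavyColors Lv g N).card < Lv.card) :
    ∃ c ∈ Lv, (N ∩ g ⁻¹' {c}).Subsingleton := by
  obtain ⟨c, hc, hch⟩ := Finset.exists_mem_notMem_of_card_lt_card h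
  exact ⟨c, hc, subsingleton_of_notMem_heavyColors Lv g hN hc hch⟩

theorem exists_ne_subsingleton_of_card_heavyColors_add_two_le (hN : N.Finite)
    (h : (heavyColors Lv g N).card + 2 ≤ Lv.card) :
    ∃ c₁ ∈ Lv, ∃ c₂ ∈ Lv, c₁ ≠ c₂ ∧
      (N ∩ g ⁻¹' {c₁}).Subsingleton ∧ (N ∩ g ⁻¹' {c₂}).Subsingleton := by
  classical
  obtain ⟨c₁, hc₁, hch₁⟩ : ∃ c ∈ Lv, c ∉ heavyColors Lv g N :=
    Finset.exists_mem_notMem_of_card_lt_card (by omega)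
  obtain ⟨c₂, hc₂, hch₂⟩ : ∃ c ∈ Lv, c ∉ insert c₁ (heavyColors Lv g N) :=
    Finset.exists_mem_notMem_of_card_lt_card ((Finset.card_insert_le _ _).trans_lt (by omega))
  rw [Finset.mem_insert, not_or] at hch₂
  exact ⟨c₁, hc₁, c₂, hc₂, Ne.symm hch₂.1, subsingleton_of_notMem_heavyColors Lv g hN hc₁ hch₁,
    subsingleton_of_notMem_heavyColors Lv g hN hc₂ hch₂.2⟩

end Counting

theorem ncard_neighborSet_inter_compl_pair_add_one_le {v x : V} (hadj : G.Adj v x)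
    (hfin : (G.neighborSet v).Finite) :
    (G.neighborSet v ∩ {v, x}ᶜ).ncard + 1 ≤ (G.neighborSet v).ncard := by
  rw [← Set.ncard_sdiff_singleton_add_one (s := G.neighborSet v) hadj hfin, add_le_add_iff_right]
  exact Set.ncard_le_ncard (fun y ⟨hy, hyc⟩ => ⟨hy, fun h => hyc (Or.inr h)⟩) hfin.sdiff

def IsArborealExtension (G : SimpleGraph V) (L : V → Finset α) (s : Set V) (f g : V → α) :
    Prop :=
  (∀ x, g x ∈ L x) ∧ ArbColOn G Set.univ g ∧ ∀ x, x ∉ s → g x = f x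

section Extension

variable [DecidableEq V] {L : V → Finset α} {a b : V} {f : V → α}

theorem isArborealExtension_update_update (hab : a ≠ b)
    (hfL : ∀ x, x ∉ ({a, b} : Set V) → f x ∈ L x) (hf : ArbColOn G {a, b}ᶜ f)
    {ca cb : α} (hca : ca ∈ L a) (hcb : cb ∈ L b)
    (ha : (G.neighborSet a ∩ {a, b}ᶜ ∩ f ⁻¹' {ca}).Subsingleton)
    (hb : (G.neighborSet b ∩ {b}ᶜ ∩ update f a ca ⁻¹' {cb}).Subsingleton) :
    IsArborealExtension G L {a, b} f (update (update f a ca) b cb) := by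
  have hins : insert a ({a, b} : Set V)ᶜ = {b}ᶜ := by
    ext x; by_cases x = a <;> simp_all
  refine ⟨fun x => ?_, ?_, fun x hx => ?_⟩
  · by_cases hxb : x = b
    · subst hxb; rwa [update_self]
    by_cases hxa : x = a
    · subst hxa; rwa [update_of_ne hxb, update_self]
    rw [update_of_ne hxb, update_of_ne hxa]
    exact hfL x (by simp [hxa, hxb])
  · have h₁ := arbColOn_update_insert hf (by simp) ha
    rw [hins] at h₁
    have h₂ := arbColOn_update_insert h₁ (by simp) hb
    rwa [Set.compl_eq_univ_sdiff, Set.insert_sdiff_singleton,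
      Set.insert_eq_of_mem (Set.mem_univ b)] at h₂
  · simp only [Set.mem_insert_iff, Set.mem_singleton_iff, not_or] at hx
    rw [update_of_ne hx.2, update_of_ne hx.1]

theorem exists_two_isArborealExtension (hab : a ≠ b)
    (hfL : ∀ x, x ∉ ({a, b} : Set V) → f x ∈ L x) (hf : ArbColOn G {a, b}ᶜ f)
    {c₁ c₂ : α} (hc₁ : c₁ ∈ L a) (hc₂ : c₂ ∈ L a) (hne : c₁ ≠ c₂)
    (h₁ : (G.neighborSet a ∩ {a, b}ᶜ ∩ f ⁻¹' {c₁}).Subsingleton)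
    (h₂ : (G.neighborSet a ∩ {a, b}ᶜ ∩ f ⁻¹' {c₂}).Subsingleton)
    (hb : ∀ c ∈ L a, ∃ d ∈ L b, (G.neighborSet b ∩ {b}ᶜ ∩ update f a c ⁻¹' {d}).Subsingleton) :
    ∃ g₁ g₂, IsArborealExtension G L {a, b} f g₁ ∧ IsArborealExtension G L {a, b} f g₂ ∧
      g₁ ≠ g₂ := by
  obtain ⟨d₁, hd₁, hb₁⟩ := hb c₁ hc₁
  obtain ⟨d₂, hd₂, hb₂⟩ := hb c₂ hc₂
  refine ⟨_, _, isArborealExtension_update_update hab hfL hf hc₁ hd₁ h₁ hb₁,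
    isArborealExtension_update_update hab hfL hf hc₂ hd₂ h₂ hb₂, fun h => hne ?_⟩
  simpa [update_of_ne hab] using congrFun h a

end Extension

end

theorem stmt_5 {V α : Type*} [Fintype V] (G : SimpleGraph V)
    (L : V → Finset α) (hL : ∀ x, (L x).card = 3)
    (u w : V) (hadj : G.Adj u w)
    (hu : (G.neighborSet u).ncard = 4) (hw : (G.neighborSet w).ncard ≤ 5)
    (f : V → α)
    (hfL : ∀ x, x ∉ ({u, w} : Set V) → f x ∈ L x)
    (hf : ArbColOn G ({u, w} : Set V)ᶜ f) :
    ∃ g₁ g₂ : V → α,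
      ((∀ x, g₁ x ∈ L x) ∧ ArbColOn G Set.univ g₁ ∧
        ∀ x, x ∉ ({u, w} : Set V) → g₁ x = f x) ∧
      ((∀ x, g₂ x ∈ L x) ∧ ArbColOn G Set.univ g₂ ∧
        ∀ x, x ∉ ({u, w} : Set V) → g₂ x = f x) ∧
      g₁ ≠ g₂ := by
  classical
  have hLu := hL u
  have hLw := hL w
  have hNu := ncard_neighborSet_inter_compl_pair_add_one_le hadj (Set.toFinite _)
  have hNw := ncard_neighborSet_inter_compl_pair_add_one_le hadj.symm (Set.toFinite _)
  by_cases hcov : ∀ c ∈ L w, (G.neighborSet w ∩ {w, u}ᶜ ∩ f ⁻¹' {c}).Nonempty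
  · have := card_add_card_heavyColors_le (L w) f (Set.toFinite _) hcov
    obtain ⟨c₁, hc₁, c₂, hc₂, hne, h₁, h₂⟩ :=
      exists_ne_subsingleton_of_card_heavyColors_add_two_le (L w) f
        (Set.toFinite (G.neighborSet w ∩ {w, u}ᶜ)) (by omega)
    rw [Set.pair_comm] at hfL hf ⊢
    refine exists_two_isArborealExtension hadj.ne' hfL hf hc₁ hc₂ hne h₁ h₂ fun c _ => ?_
    have := two_mul_card_heavyColors_le (L u) (update f w c)
      (Set.toFinite (G.neighborSet u ∩ {u}ᶜ))
    have := Set.ncard_inter_le_ncard_left (G.neighborSet u) {u}ᶜ (Set.toFinite _)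
    exact exists_subsingleton_of_card_heavyColors_lt (L u) (update f w c) (Set.toFinite _)
      (by omega)
  · push Not at hcov
    obtain ⟨c₀, hc₀, hmiss⟩ := hcov
    have := two_mul_card_heavyColors_le (L u) f (Set.toFinite (G.neighborSet u ∩ {u, w}ᶜ))
    obtain ⟨d₁, hd₁, d₂, hd₂, hne, h₁, h₂⟩ :=
      exists_ne_subsingleton_of_card_heavyColors_add_two_le (L u) f
        (Set.toFinite (G.neighborSet u ∩ {u, w}ᶜ)) (by omega)
    refine exists_two_isArborealExtension hadj.ne hfL hf hd₁ hd₂ hne h₁ h₂ fun c _ =>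
      ⟨c₀, hc₀, (Set.subsingleton_singleton (a := u)).anti fun x ⟨⟨hwx, hxw⟩, hx⟩ => ?_⟩
    by_contra hxu
    rw [Set.mem_preimage, update_of_ne hxu] at hx
    exact hmiss.subset ⟨⟨hwx, by simp_all⟩, hx⟩
end

section
/- Let G be a finite simple graph and let L be a list-assignment for G with |L(v)| = 3 for every vertex v. Let u be a vertex whose neighborhood is exactly {u_1, u_2, …, u_8}, where u_t u_{t+1} is an edge of G for every t (indices modulo 8). Suppose there are four distinct indices i, j, k, l ∈ {1, …, 8} such that deg(u_i) = deg(u_j) = 4, deg(u_k) ≤ 5, deg(u_l) = 6 (degrees taken in G), and l ≡ j + 1 (mod 8). Then every arboreal L-coloring of G − {u, u_i, u_j, u_k, u_l} can be extended to an arboreal L-coloring of G in at least two distinct ways. -/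
open SimpleGraph

namespace SimpleGraph

variable {V : Type*} {G : SimpleGraph V}

theorem isAcyclic_induce_iff_s8 {s : Set V} :
    (G.induce s).IsAcyclic ↔ ∀ (a : V) (p : G.Walk a a), p.IsCycle → ¬ ∀ x ∈ p.support, x ∈ s := by
  have hinj : Function.Injective (Embedding.induce (G := G) s).toHom := Subtype.val_injective
  refine ⟨fun h a p hp hs => h (p.induce s hs) ?_, fun h a q hq => h _ _
    ((Walk.isCycle_map_iff_of_injective hinj).mpr hq) fun x hx => ?_⟩
  · rwa [← Walk.isCycle_map_iff_of_injective hinj, Walk.map_induce]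
  · rw [Walk.support_map] at hx
    obtain ⟨y, -, rfl⟩ := List.mem_map.mp hx
    exact y.2

theorem Walk.IsCycle.exists_two_adj_mem_support {a : V} {p : G.Walk a a} (hp : p.IsCycle)
    {v : V} (hv : v ∈ p.support) :
    ∃ y z, y ≠ z ∧ G.Adj v y ∧ G.Adj v z ∧ y ∈ p.support ∧ z ∈ p.support := by
  classical
  have hq := (Walk.isCycle_rotate hv).mpr hp
  have hnil := hq.not_nil
  exact ⟨_, _, hq.snd_ne_penultimate, Walk.adj_snd hnil, (Walk.adj_penultimate hnil).symm,
    (Walk.mem_support_rotate_iff ..).mp (Walk.getVert_mem_support _ _),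
    (Walk.mem_support_rotate_iff ..).mp (Walk.getVert_mem_support _ _)⟩

end SimpleGraph

namespace ArbColOn

variable {V α : Type*} {G : SimpleGraph V} {s : Set V} {f g : V → α}

theorem congr_s8 (hf : ArbColOn G s f) (h : s.EqOn g f) : ArbColOn G s g := by
  intro c
  have hset : {v | v ∈ s ∧ g v = c} = {v | v ∈ s ∧ f v = c} := by
    ext x; simp +contextual [h _]
  exact hset ▸ hf c

theorem insert_of_subsingleton (hg : ArbColOn G s g) {v : V}
    (hv : {a | a ∈ s ∧ G.Adj v a ∧ g a = g v}.Subsingleton) :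
    ArbColOn G (insert v s) g := by
  intro c
  rw [isAcyclic_induce_iff_s8]
  intro a p hp hps
  by_cases hvp : v ∈ p.support
  · obtain ⟨y, z, hyz, hvy, hvz, hy, hz⟩ := hp.exists_two_adj_mem_support hvp
    have hsc : ∀ x, G.Adj v x → x ∈ p.support → x ∈ {a | a ∈ s ∧ G.Adj v a ∧ g a = g v} :=
      fun x hvx hx => ⟨(hps x hx).1.resolve_left hvx.ne', hvx,
        (hps x hx).2.trans (hps v hvp).2.symm⟩
    exact hyz (hv (hsc y hvy hy) (hsc z hvz hz))
  · exact isAcyclic_induce_iff_s8.mp (hg c) a p hp fun x hx =>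
      ⟨((hps x hx).1.resolve_left fun h => hvp (h ▸ hx)), (hps x hx).2⟩

theorem update_insert_of_subsingleton [DecidableEq V] (hg : ArbColOn G s g) {v : V} (hv : v ∉ s)
    {c : α} (hc : {a | a ∈ s ∧ G.Adj v a ∧ g a = c}.Subsingleton) :
    ArbColOn G (insert v s) (Function.update g v c) := by
  have hs : s.EqOn (Function.update g v c) g := fun x hx =>
    Function.update_of_ne (ne_of_mem_of_not_mem hx hv) ..
  refine (hg.congr_s8 hs).insert_of_subsingleton (hc.anti ?_)
  rintro a ⟨ha, hva, hac⟩
  exact ⟨ha, hva, by simpa [hs ha] using hac⟩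

theorem two_mul_card_le_ncard [Finite V] [DecidableEq V] (hg : ArbColOn G s g) {v : V}
    (hv : v ∉ s) {D : Finset α} (hD : ∀ c ∈ D, ¬ ArbColOn G (insert v s) (Function.update g v c)) :
    2 * D.card ≤ (G.neighborSet v ∩ s).ncard := by
  classical
  set N := (G.neighborSet v ∩ s).toFinite.toFinset
  have hfiber : ∀ c ∈ D, 2 ≤ (N.filter fun a => g a = c).card := by
    intro c hc
    obtain ⟨a, ⟨ha, hva, hac⟩, b, ⟨hb, hvb, hbc⟩, hab⟩ :=
      Set.not_subsingleton_iff.mp (mt (hg.update_insert_of_subsingleton hv) (hD c hc))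
    exact Finset.one_lt_card.mpr ⟨a, by simp [N, hva, ha, hac], b, by simp [N, hvb, hb, hbc], hab⟩
  calc 2 * D.card = ∑ _c ∈ D, 2 := by rw [Finset.sum_const, smul_eq_mul, mul_comm]
    _ ≤ ∑ c ∈ D, (N.filter fun a => g a = c).card := Finset.sum_le_sum hfiber
    _ = (N.filter fun a => g a ∈ D).card := Finset.sum_card_fiberwise_eq_card_filter ..
    _ ≤ N.card := Finset.card_filter_le ..
    _ = (G.neighborSet v ∩ s).ncard := (Set.ncard_eq_toFinset_card _ _).symm

theorem exists_mem_update [Finite V] [DecidableEq V] (hg : ArbColOn G s g) {v : V} (hv : v ∉ s)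
    {C : Finset α} (hC : (G.neighborSet v ∩ s).ncard < 2 * C.card) :
    ∃ c ∈ C, ArbColOn G (insert v s) (Function.update g v c) := by
  by_contra! h
  exact hC.not_ge (hg.two_mul_card_le_ncard hv h)

theorem exists_ne_mem_update [Finite V] [DecidableEq V] (hg : ArbColOn G s g) {v : V}
    (hv : v ∉ s) {C : Finset α} (hC : (G.neighborSet v ∩ s).ncard + 2 < 2 * C.card) :
    ∃ c₁ ∈ C, ∃ c₂ ∈ C, c₁ ≠ c₂ ∧ ArbColOn G (insert v s) (Function.update g v c₁) ∧
      ArbColOn G (insert v s) (Function.update g v c₂) := by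
  classical
  have hbad := hg.two_mul_card_le_ncard hv (D := C.filter fun c => ¬ ArbColOn G (insert v s)
    (Function.update g v c)) fun c hc => (Finset.mem_filter.mp hc).2
  have hsplit := Finset.card_filter_add_card_filter_not (s := C)
    (fun c => ArbColOn G (insert v s) (Function.update g v c))
  obtain ⟨c₁, hc₁, c₂, hc₂, hne⟩ := Finset.one_lt_card.mp (by omega :
    1 < (C.filter fun c => ArbColOn G (insert v s) (Function.update g v c)).card)
  rw [Finset.mem_filter] at hc₁ hc₂
  exact ⟨c₁, hc₁.1, c₂, hc₂.1, hne, hc₁.2, hc₂.2⟩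

end ArbColOn

section Greedy

variable {V α : Type*} {G : SimpleGraph V}

theorem forall_update_mem_insert [DecidableEq V] {L : V → Finset α} {s : Set V} {g : V → α}
    (hgL : ∀ x ∈ s, g x ∈ L x) {v : V} {c : α} (hc : c ∈ L v) :
    ∀ x ∈ insert v s, Function.update g v c x ∈ L x := by
  intro x hx
  by_cases hxv : x = v
  · subst hxv
    simpa using hc
  · simpa [hxv] using hgL x (hx.resolve_left hxv)

def IsArbGreedyOrder (G : SimpleGraph V) (L : V → Finset α) : Set V → List V → Prop
  | _, [] => True
  | s, v :: vs => v ∉ s ∧ (G.neighborSet v ∩ s).ncard < 2 * (L v).card ∧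
      IsArbGreedyOrder G L (insert v s) vs

theorem ncard_neighborSet_inter_add_ncard_le [Finite V] {v : V} {s D : Set V}
    (hD : D ⊆ G.neighborSet v \ s) :
    (G.neighborSet v ∩ s).ncard + D.ncard ≤ (G.neighborSet v).ncard := by
  rw [← Set.ncard_inter_add_ncard_sdiff_eq_ncard (G.neighborSet v) s]
  exact Nat.add_le_add_left (Set.ncard_le_ncard hD) _

theorem IsArbGreedyOrder.cons_of_subset [Finite V] {L : V → Finset α} {s : Set V} {v : V}
    {vs : List V} (hvs : IsArbGreedyOrder G L (insert v s) vs) (hv : v ∉ s) {D : Set V}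
    (hD : D ⊆ G.neighborSet v \ s) (hdeg : (G.neighborSet v).ncard < 2 * (L v).card + D.ncard) :
    IsArbGreedyOrder G L s (v :: vs) :=
  ⟨hv, by have := ncard_neighborSet_inter_add_ncard_le hD; omega, hvs⟩

theorem ArbColOn.exists_extend_of_isArbGreedyOrder [Finite V] [DecidableEq V]
    {L : V → Finset α} {vs : List V} {s : Set V} {g : V → α} (hvs : IsArbGreedyOrder G L s vs)
    (hg : ArbColOn G s g) (hgL : ∀ x ∈ s, g x ∈ L x) :
    ∃ g' : V → α, ArbColOn G (s ∪ {x | x ∈ vs}) g' ∧ (∀ x ∈ s ∪ {x | x ∈ vs}, g' x ∈ L x) ∧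
      ∀ x ∈ s, g' x = g x := by
  induction vs generalizing s g with
  | nil => exact ⟨g, by simpa using hg, by simpa using hgL, fun _ _ => rfl⟩
  | cons v vs ih =>
    obtain ⟨hv, hN, hvs⟩ := hvs
    obtain ⟨c, hc, hgc⟩ := hg.exists_mem_update hv hN
    obtain ⟨g', hg', hg'L, hg'g⟩ := ih hvs hgc (forall_update_mem_insert hgL hc)
    have hset : insert v s ∪ {x | x ∈ vs} = s ∪ {x | x ∈ v :: vs} := by
      ext x; simp [or_left_comm, or_assoc]
    refine ⟨g', hset ▸ hg', hset ▸ hg'L, fun x hx => ?_⟩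
    rw [hg'g x (Set.mem_insert_of_mem v hx)]
    exact Function.update_of_ne (ne_of_mem_of_not_mem hx hv) ..

theorem ArbColOn.exists_two_extensions [Finite V] [DecidableEq V] {L : V → Finset α} {s : Set V}
    {f : V → α} {v : V} {vs : List V} (hf : ArbColOn G s f) (hfL : ∀ x ∈ s, f x ∈ L x)
    (hv : v ∉ s) (hN : (G.neighborSet v ∩ s).ncard + 2 < 2 * (L v).card)
    (hvs : IsArbGreedyOrder G L (insert v s) vs) (hcover : ∀ x, x ∈ s ∨ x = v ∨ x ∈ vs) :
    ∃ g₁ g₂ : V → α,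
      ((∀ x, g₁ x ∈ L x) ∧ ArbColOn G Set.univ g₁ ∧ ∀ x ∈ s, g₁ x = f x) ∧
      ((∀ x, g₂ x ∈ L x) ∧ ArbColOn G Set.univ g₂ ∧ ∀ x ∈ s, g₂ x = f x) ∧
      g₁ ≠ g₂ := by
  have huniv : insert v s ∪ {x | x ∈ vs} = Set.univ :=
    Set.eq_univ_of_forall fun x => by simpa [or_left_comm, or_assoc] using hcover x
  have extend : ∀ c ∈ L v, ArbColOn G (insert v s) (Function.update f v c) →
      ∃ g, ((∀ x, g x ∈ L x) ∧ ArbColOn G Set.univ g ∧ ∀ x ∈ s, g x = f x) ∧ g v = c := by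
    intro c hc hfc
    obtain ⟨g, hg, hgL, hgf⟩ :=
      hfc.exists_extend_of_isArbGreedyOrder hvs (forall_update_mem_insert hfL hc)
    rw [huniv] at hg hgL
    refine ⟨g, ⟨fun x => hgL x trivial, hg, fun x hx => ?_⟩, by simpa using hgf v (.inl rfl)⟩
    simpa [ne_of_mem_of_not_mem hx hv] using hgf x (.inr hx)
  obtain ⟨c₁, hc₁, c₂, hc₂, hne, h₁, h₂⟩ := hf.exists_ne_mem_update hv hN
  obtain ⟨g₁, hg₁, hg₁v⟩ := extend c₁ hc₁ h₁
  obtain ⟨g₂, hg₂, hg₂v⟩ := extend c₂ hc₂ h₂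
  exact ⟨g₁, g₂, hg₁, hg₂, fun h => hne (hg₁v ▸ hg₂v ▸ h ▸ rfl)⟩

end Greedy

theorem stmt_8 {V α : Type*} [Fintype V] (G : SimpleGraph V)
    (L : V → Finset α) (hL : ∀ x, (L x).card = 3)
    (u : V) (w : Fin 8 → V) (hw : Function.Injective w)
    (hnbr : G.neighborSet u = Set.range w)
    (hcyc : ∀ t : Fin 8, G.Adj (w t) (w (t + 1)))
    (i j k l : Fin 8)
    (hij : i ≠ j) (hik : i ≠ k) (hil : i ≠ l) (hjk : j ≠ k) (hjl : j ≠ l) (hkl : k ≠ l)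
    (hl : l = j + 1)
    (hdi : (G.neighborSet (w i)).ncard = 4) (hdj : (G.neighborSet (w j)).ncard = 4)
    (hdk : (G.neighborSet (w k)).ncard ≤ 5) (hdl : (G.neighborSet (w l)).ncard = 6)
    (f : V → α)
    (hfL : ∀ x, x ∉ ({u, w i, w j, w k, w l} : Set V) → f x ∈ L x)
    (hf : ArbColOn G ({u, w i, w j, w k, w l} : Set V)ᶜ f) :
    ∃ g₁ g₂ : V → α,
      ((∀ x, g₁ x ∈ L x) ∧ ArbColOn G Set.univ g₁ ∧
        ∀ x, x ∉ ({u, w i, w j, w k, w l} : Set V) → g₁ x = f x) ∧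
      ((∀ x, g₂ x ∈ L x) ∧ ArbColOn G Set.univ g₂ ∧
        ∀ x, x ∉ ({u, w i, w j, w k, w l} : Set V) → g₂ x = f x) ∧
      g₁ ≠ g₂ := by
  classical
  set S : Set V := {u, w i, w j, w k, w l}
  have hadj (t : Fin 8) : G.Adj u (w t) := (hnbr ▸ Set.mem_range_self t : w t ∈ G.neighborSet u)
  have hwu (t : Fin 8) : w t ≠ u := (hadj t).ne'
  have hdu : (G.neighborSet u).ncard = 8 := by
    rw [hnbr, Set.ncard_range_of_injective hw, Nat.card_eq_fintype_card, Fintype.card_fin]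
  have hN : (G.neighborSet (w i) ∩ Sᶜ).ncard + 2 < 2 * (L (w i)).card := by
    have := ncard_neighborSet_inter_add_ncard_le (G := G) (v := w i) (s := Sᶜ) (D := {u})
      (by simp [S, (hadj i).symm])
    rw [Set.ncard_singleton, hdi] at this
    rw [hL]
    omega
  have hvs : IsArbGreedyOrder G L (insert (w i) Sᶜ) [u, w l, w k, w j] := by
    refine .cons_of_subset (D := {w j, w k, w l}) ?_ (by simp [S, (hwu i).symm])
      (by simp [Set.insert_subset_iff, S, hadj, hw.eq_iff, hij.symm, hik.symm, hil.symm])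
      (by
        rw [Set.ncard_eq_three.mpr ⟨_, _, _, hw.ne hjk, hw.ne hjl, hw.ne hkl, rfl⟩, hdu, hL]
        omega)
    refine .cons_of_subset (D := {w j}) ?_ (by simp [S, hw.eq_iff, hwu, hil.symm])
      (by simp [S, hl ▸ (hcyc j).symm, hw.eq_iff, hwu, hij.symm])
      (by rw [Set.ncard_singleton, hdl, hL]; omega)
    refine .cons_of_subset (D := ∅) ?_ (by simp [S, hw.eq_iff, hwu, hik.symm, hkl])
      (Set.empty_subset _) (by rw [Set.ncard_empty, hL]; omega)
    exact .cons_of_subset trivial (by simp [S, hw.eq_iff, hwu, hij.symm, hjl, hjk])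
      (Set.empty_subset _) (by rw [Set.ncard_empty, hL, hdj]; omega)
  exact hf.exists_two_extensions hfL (by simp [S]) hN hvs fun x => by
    by_cases hx : x ∈ S <;> simp [S] at hx ⊢ <;> tauto
end
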